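/- Let n ≥ 1 and let U_1, …, U_{2^{n-1}} be 2×2 complex unitary matrices. Then there exist real numbers α_k, β_k, γ_k, δ_k (k = 1, …, 2^{n-1}) such that the 2^n × 2^n block-diagonal matrix diag(U_1, …, U_{2^{n-1}}) equals the product A_1·A_2·A_3·A_4·A_5·A_6, where A_1 = diag(e^{iα_1}, …, e^{iα_{2^{n-1}}}) ⊗ I_2, A_2 = diag(R_z(β_1), …, R_z(β_{2^{n-1}})), A_3 = I_{2^{n-1}} ⊗ (S·H), A_4 = diag(R_z(γ_1), …, R_z(γ_{2^{n-1}})), A_5 = I_{2^{n-1}} ⊗ (H·S†), and A_6 = diag(R_z(δ_1), …, R_z(δ_{2^{n-1}})). -/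

import Mathlib

open Matrix Complex Kronecker

/-- The single-qubit Z-rotation gate `R_z(θ) = [[e^{-iθ/2}, 0], [0, e^{iθ/2}]]`. -/
noncomputable def Rz (θ : ℝ) : Matrix (Fin 2) (Fin 2) ℂ :=
  !![Complex.exp (-(θ / 2 : ℝ) * Complex.I), 0; 0, Complex.exp ((θ / 2 : ℝ) * Complex.I)]

/-- The Hadamard gate `H = (1/√2)·[[1,1],[1,−1]]`. -/
noncomputable def Hgate : Matrix (Fin 2) (Fin 2) ℂ :=
  ((1 / Real.sqrt 2 : ℝ) : ℂ) • !![1, 1; 1, -1]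

/-- The phase gate `S = [[1,0],[0,i]]`. -/
def Sgate : Matrix (Fin 2) (Fin 2) ℂ := !![1, 0; 0, Complex.I]

/-- `blockDiag2 M` is the block-diagonal matrix `diag(M 0, M 1, …, M (N-1))` with 2×2 blocks,
of size `2N × 2N`, with rows and columns indexed by `Fin N × Fin 2` (block index first). -/
def blockDiag2 {N : ℕ} (M : Fin N → Matrix (Fin 2) (Fin 2) ℂ) :
    Matrix (Fin N × Fin 2) (Fin N × Fin 2) ℂ :=
  Matrix.of fun p q => if p.1 = q.1 then M p.1 p.2 q.2 else 0

/-!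
A unitary `2 × 2` matrix is a phase `e^{iα}` times a matrix of determinant one, and a matrix
`[[a, b], [-b̄, ā]]` of `SU(2)` is `R_z(β) R_y(γ) R_z(δ)` with `cos (γ/2) = |a|`, `sin (γ/2) = |b|`
and `β, δ` fixed by the arguments of `a` and `b` (the ZYZ Euler decomposition). Conjugation by `S H`
turns `R_z(γ)` into `R_y(γ)`. Block-diagonal matrices multiply blockwise, so decomposing every block
separately gives the theorem.
-/

noncomputable def Ry (θ : ℝ) : Matrix (Fin 2) (Fin 2) ℂ :=
  !![(Real.cos (θ / 2) : ℂ), -(Real.sin (θ / 2) : ℂ);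
    (Real.sin (θ / 2) : ℂ), (Real.cos (θ / 2) : ℂ)]

lemma Rz_eq_cos_sin (θ : ℝ) :
    Rz θ = !![Real.cos (θ / 2) - Real.sin (θ / 2) * I, 0;
      0, Real.cos (θ / 2) + Real.sin (θ / 2) * I] := by
  rw [Rz, ← ofReal_neg, exp_mul_I, exp_mul_I, ← ofReal_cos, ← ofReal_sin, ← ofReal_cos,
    ← ofReal_sin, Real.cos_neg, Real.sin_neg, ofReal_neg, neg_mul, ← sub_eq_add_neg]

lemma Sgate_mul_Hgate_mul_Rz_mul_Hgate_mul_conjTranspose_Sgate (θ : ℝ) :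
    Sgate * Hgate * Rz θ * (Hgate * Sgateᴴ) = Ry θ := by
  have hsqrt : (Real.sqrt 2 : ℂ) ^ 2 = 2 := by exact_mod_cast Real.sq_sqrt zero_le_two
  rw [Rz_eq_cos_sin]
  ext i j
  fin_cases i <;> fin_cases j <;>
    simp [Ry, Sgate, Hgate, Matrix.mul_apply, Fin.sum_univ_two, vecMul, dotProduct] <;>
    field_simp <;> ring_nf <;> simp [hsqrt]

lemma Rz_mul_Ry_mul_Rz (φ ψ γ : ℝ) :
    Rz (-(φ + ψ)) * Ry γ * Rz (ψ - φ) =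
      !![exp (φ * I) * Real.cos (γ / 2), -(exp (ψ * I) * Real.sin (γ / 2));
        exp (-ψ * I) * Real.sin (γ / 2), exp (-φ * I) * Real.cos (γ / 2)] := by
  ext i j
  fin_cases i <;> fin_cases j <;>
    simp [Rz, Ry, Matrix.mul_apply, Fin.sum_univ_two] <;>
    rw [mul_right_comm, ← exp_add] <;> congr 2 <;> ring

lemma exp_ofReal_mul_I_mem_unitary (t : ℝ) : exp (t * I) ∈ unitary ℂ := by
  rw [Unitary.mem_iff_star_mul_self, star_def, ← exp_conj, ← exp_add]
  simp

lemma exists_exp_smul_mem_specialUnitaryGroup {n : Type*} [Fintype n] [DecidableEq n]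
    {A : Matrix n n ℂ} (hA : A ∈ unitaryGroup n ℂ) :
    ∃ α : ℝ, ∃ W ∈ specialUnitaryGroup n ℂ, A = exp (α * I) • W := by
  set α := arg A.det / Fintype.card n
  have hdet : ‖A.det‖ = 1 := CStarRing.norm_of_mem_unitary (det_of_mem_unitary hA)
  have hcard : (Fintype.card n : ℂ) * (α : ℂ) = arg A.det := by
    rcases isEmpty_or_nonempty n with _ | _
    · simp [det_isEmpty]
    · push_cast [α]; field_simp
  refine ⟨α, exp (-α * I) • A, mem_specialUnitaryGroup_iff.2 ⟨?_, ?_⟩, ?_⟩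
  · exact Unitary.smul_mem_of_mem (by exact_mod_cast exp_ofReal_mul_I_mem_unitary (-α)) hA
  · rw [det_smul, ← exp_nat_mul, ← norm_mul_exp_arg_mul_I A.det, hdet,
      ofReal_one, one_mul, ← exp_add, ← exp_zero]
    congr 1
    linear_combination (-I) * hcard
  · rw [smul_smul, ← exp_add]
    simp

lemma norm_sq_add_norm_sq_of_mem_unitaryGroup_fin_two {W : Matrix (Fin 2) (Fin 2) ℂ}
    (hW : W ∈ unitaryGroup (Fin 2) ℂ) : ‖W 0 0‖ ^ 2 + ‖W 0 1‖ ^ 2 = 1 := by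
  have h := congrFun₂ (mem_unitaryGroup_iff.1 hW) 0 0
  simp only [Matrix.mul_apply, star_apply, RCLike.star_def, mul_conj, ← Complex.sq_norm,
    ofReal_pow, Fin.sum_univ_two, one_apply_eq] at h
  exact_mod_cast h

lemma eq_of_mem_specialUnitaryGroup_fin_two {W : Matrix (Fin 2) (Fin 2) ℂ}
    (hW : W ∈ specialUnitaryGroup (Fin 2) ℂ) :
    W = !![W 0 0, W 0 1; -star (W 0 1), star (W 0 0)] := by
  obtain ⟨hU, hdet⟩ := mem_specialUnitaryGroup_iff.1 hW
  have hstar : star W = adjugate W := by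
    rw [← inv_eq_left_inv (mem_unitaryGroup_iff'.1 hU), Matrix.inv_def, hdet, Ring.inverse_one,
      one_smul]
  have h10 := congrFun₂ hstar 1 0
  have h00 := congrFun₂ hstar 0 0
  simp only [star_apply, RCLike.star_def, adjugate_fin_two, of_apply, cons_val', cons_val_zero,
    cons_val_fin_one, cons_val_one] at h10 h00
  ext i j
  fin_cases i <;> fin_cases j <;> simp [h10, h00]

lemma exists_eq_exp_mul_cos_and_eq_exp_mul_sin {a b : ℂ} (h : ‖a‖ ^ 2 + ‖b‖ ^ 2 = 1) :
    ∃ φ ψ γ : ℝ, a = exp (φ * I) * Real.cos (γ / 2) ∧ b = exp (ψ * I) * Real.sin (γ / 2) := by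
  have ha : ‖a‖ ≤ 1 := by nlinarith [norm_nonneg a, sq_nonneg ‖b‖]
  refine ⟨a.arg, b.arg, 2 * Real.arccos ‖a‖, ?_, ?_⟩
  · rw [mul_div_cancel_left₀ _ two_ne_zero, Real.cos_arccos (by linarith [norm_nonneg a]) ha,
      mul_comm, norm_mul_exp_arg_mul_I]
  · rw [mul_div_cancel_left₀ _ two_ne_zero, Real.sin_arccos, show 1 - ‖a‖ ^ 2 = ‖b‖ ^ 2 by linarith,
      Real.sqrt_sq (norm_nonneg b), mul_comm, norm_mul_exp_arg_mul_I]

lemma exists_eq_Rz_mul_Ry_mul_Rz {W : Matrix (Fin 2) (Fin 2) ℂ}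
    (hW : W ∈ specialUnitaryGroup (Fin 2) ℂ) : ∃ β γ δ : ℝ, W = Rz β * Ry γ * Rz δ := by
  have hnorm : ‖W 0 0‖ ^ 2 + ‖-W 0 1‖ ^ 2 = 1 := by
    rw [norm_neg]; exact norm_sq_add_norm_sq_of_mem_unitaryGroup_fin_two hW.1
  obtain ⟨φ, ψ, γ, ha, hb⟩ := exists_eq_exp_mul_cos_and_eq_exp_mul_sin hnorm
  refine ⟨-(φ + ψ), γ, ψ - φ, ?_⟩
  rw [Rz_mul_Ry_mul_Rz, eq_of_mem_specialUnitaryGroup_fin_two hW, ha, neg_eq_iff_eq_neg.1 hb]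
  simp [← exp_conj, -ofReal_cos, -ofReal_sin]

lemma exists_eq_exp_smul_Rz_mul_Ry_mul_Rz {U : Matrix (Fin 2) (Fin 2) ℂ}
    (hU : U ∈ unitaryGroup (Fin 2) ℂ) :
    ∃ α β γ δ : ℝ, U = exp (α * I) • (Rz β * Ry γ * Rz δ) := by
  obtain ⟨α, W, hW, rfl⟩ := exists_exp_smul_mem_specialUnitaryGroup hU
  obtain ⟨β, γ, δ, rfl⟩ := exists_eq_Rz_mul_Ry_mul_Rz hW
  exact ⟨α, β, γ, δ, rfl⟩

section blockDiag2

variable {N : ℕ}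

lemma blockDiag2_mul (M M' : Fin N → Matrix (Fin 2) (Fin 2) ℂ) :
    blockDiag2 M * blockDiag2 M' = blockDiag2 (fun k => M k * M' k) := by
  ext ⟨i, a⟩ ⟨j, b⟩
  by_cases h : i = j <;> simp [blockDiag2, Matrix.mul_apply, Fintype.sum_prod_type, h]

lemma diagonal_kronecker_eq_blockDiag2 (d : Fin N → ℂ) (A : Matrix (Fin 2) (Fin 2) ℂ) :
    diagonal d ⊗ₖ A = blockDiag2 (fun k => d k • A) := by
  ext ⟨i, a⟩ ⟨j, b⟩
  simp [blockDiag2, diagonal, ite_mul]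

lemma one_kronecker_eq_blockDiag2 (A : Matrix (Fin 2) (Fin 2) ℂ) :
    (1 : Matrix (Fin N) (Fin N) ℂ) ⊗ₖ A = blockDiag2 (fun _ => A) := by
  rw [← diagonal_one, diagonal_kronecker_eq_blockDiag2]
  simp

end blockDiag2

theorem blockDiag_unitary_decomposition_general (n : ℕ)
    (U : Fin (2 ^ (n - 1)) → Matrix (Fin 2) (Fin 2) ℂ)
    (hU : ∀ k, U k * (U k)ᴴ = 1) :
    ∃ α β γ δ : Fin (2 ^ (n - 1)) → ℝ,
      blockDiag2 U =
        ((Matrix.diagonal fun k => Complex.exp ((α k : ℂ) * Complex.I)) ⊗ₖ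
            (1 : Matrix (Fin 2) (Fin 2) ℂ)) *
          blockDiag2 (fun k => Rz (β k)) *
          ((1 : Matrix (Fin (2 ^ (n - 1))) (Fin (2 ^ (n - 1))) ℂ) ⊗ₖ (Sgate * Hgate)) *
          blockDiag2 (fun k => Rz (γ k)) *
          ((1 : Matrix (Fin (2 ^ (n - 1))) (Fin (2 ^ (n - 1))) ℂ) ⊗ₖ (Hgate * Sgateᴴ)) *
          blockDiag2 (fun k => Rz (δ k)) := by
  choose α β γ δ h using fun k =>
    exists_eq_exp_smul_Rz_mul_Ry_mul_Rz (mem_unitaryGroup_iff.2 (hU k))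
  refine ⟨α, β, γ, δ, ?_⟩
  rw [diagonal_kronecker_eq_blockDiag2, one_kronecker_eq_blockDiag2, one_kronecker_eq_blockDiag2]
  simp only [blockDiag2_mul]
  congr 1
  funext k
  rw [h k, ← Sgate_mul_Hgate_mul_Rz_mul_Hgate_mul_conjTranspose_Sgate]
  simp only [Matrix.mul_assoc, smul_mul, Matrix.one_mul]

/-- Decomposition of a uniformly controlled gate `diag(U_1, …, U_{2^{n-1}})` as
`A_1 · A_2 · A_3 · A_4 · A_5 · A_6`, where
`A_1 = diag(e^{iα_1}, …, e^{iα_{2^{n-1}}}) ⊗ I_2`, `A_2 = diag(R_z(β_1), …, R_z(β_{2^{n-1}}))`,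
`A_3 = I_{2^{n-1}} ⊗ (S·H)`, `A_4 = diag(R_z(γ_1), …, R_z(γ_{2^{n-1}}))`,
`A_5 = I_{2^{n-1}} ⊗ (H·S†)`, and `A_6 = diag(R_z(δ_1), …, R_z(δ_{2^{n-1}}))`. -/
theorem blockDiag_unitary_decomposition (n : ℕ) (hn : 1 ≤ n)
    (U : Fin (2 ^ (n - 1)) → Matrix (Fin 2) (Fin 2) ℂ)
    (hU : ∀ k, U k * (U k)ᴴ = 1) :
    ∃ α β γ δ : Fin (2 ^ (n - 1)) → ℝ,
      blockDiag2 U =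
        ((Matrix.diagonal fun k => Complex.exp ((α k : ℂ) * Complex.I)) ⊗ₖ
            (1 : Matrix (Fin 2) (Fin 2) ℂ)) *
          blockDiag2 (fun k => Rz (β k)) *
          ((1 : Matrix (Fin (2 ^ (n - 1))) (Fin (2 ^ (n - 1))) ℂ) ⊗ₖ (Sgate * Hgate)) *
          blockDiag2 (fun k => Rz (γ k)) *
          ((1 : Matrix (Fin (2 ^ (n - 1))) (Fin (2 ^ (n - 1))) ℂ) ⊗ₖ (Hgate * Sgateᴴ)) *
          blockDiag2 (fun k => Rz (δ k)) :=
  blockDiag_unitary_decomposition_general n U hU
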